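/- arXiv:2008.01678 — 3 statements merged into one kernel-verified Lean document; each statement's English description precedes it below -/
import Mathlib

section
/- Let z1, z2 be points in the region F_u = {z = x+iy : |x| ≤ 1/2, y ≥ 2} of the upper half-plane with Im(z1) ≥ Im(z2), and let γ ∈ SL(2,ℤ) have lower-left entry c ≠ 0. Then the hyperbolic distance satisfies d(z1, γ(z2)) > d(z1, z2). -/
open UpperHalfPlane Real MatrixGroups

lemma stmt_4_key (a b t : ℝ) (hab : b ≤ a) (hb : 2 ≤ b) (ht0 : 0 < t) (ht : t ≤ 1/2) :
    t * (1 + a ^ 2 + b ^ 2) < b * (a ^ 2 + t ^ 2) := by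
  nlinarith [mul_nonneg (by linarith : (0:ℝ) ≤ 1/2 - t)
      (by nlinarith : (0:ℝ) ≤ 1 + a^2 + b^2 - b * (t + 1/2)),
    mul_nonneg (by linarith : (0:ℝ) ≤ b - 2) (sq_nonneg a),
    mul_nonneg (by linarith : (0:ℝ) ≤ a - b) (by linarith : (0:ℝ) ≤ a + b)]

/-- For `z1, z2` in `F_u = {x+iy : |x| ≤ 1/2, y ≥ 2}` with `Im z1 ≥ Im z2`, and
`γ ∈ SL(2,ℤ)` with lower-left entry `c ≠ 0`, we have `d(z1, γ z2) > d(z1, z2)`. -/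
theorem stmt_4 (z1 z2 : ℍ)
    (hz1 : |z1.re| ≤ 1 / 2 ∧ z1.im ≥ 2) (hz2 : |z2.re| ≤ 1 / 2 ∧ z2.im ≥ 2)
    (h12 : z1.im ≥ z2.im) (γ : SL(2, ℤ)) (hc : γ 1 0 ≠ 0) :
    dist z1 (γ • z2) > dist z1 z2 := by
  obtain ⟨hx1, hy1⟩ := hz1
  obtain ⟨hx2, hy2⟩ := hz2
  set w := γ • z2 with hwdef
  have ht0 : 0 < w.im := w.im_pos
  have ha0 : (0:ℝ) < z1.im := z1.im_pos
  have hb0 : (0:ℝ) < z2.im := z2.im_pos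
  -- c^2 ≥ 1
  have hc2 : (1:ℝ) ≤ ((γ 1 0 : ℤ) : ℝ) ^ 2 := by
    have h1 : (1:ℤ) ≤ (γ 1 0) ^ 2 := by
      rcases lt_or_gt_of_ne hc with h | h <;> nlinarith
    exact_mod_cast h1
  -- normSq of denominator bound
  have hns : z2.im ^ 2 ≤ Complex.normSq (denom γ z2) := by
    rw [ModularGroup.denom_apply]
    have : Complex.normSq (((γ 1 0 : ℤ) : ℂ) * (z2 : ℂ) + ((γ 1 1 : ℤ) : ℂ)) =
        (((γ 1 0 : ℤ) : ℝ) * z2.re + ((γ 1 1 : ℤ) : ℝ)) ^ 2 +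
        (((γ 1 0 : ℤ) : ℝ) * z2.im) ^ 2 := by
      rw [Complex.normSq_apply]
      simp [Complex.add_re, Complex.add_im, Complex.mul_re, Complex.mul_im]
      ring
    rw [this]
    nlinarith [sq_nonneg (((γ 1 0 : ℤ) : ℝ) * z2.re + ((γ 1 1 : ℤ) : ℝ)), sq_nonneg z2.im]
  -- bound on the imaginary part of w
  have ht : w.im ≤ 1 / 2 := by
    rw [hwdef, ModularGroup.im_smul_eq_div_normSq]
    rw [div_le_iff₀ (by nlinarith : (0:ℝ) < Complex.normSq (denom γ z2))]
    nlinarith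
  -- reduce to cosh comparison
  have hcosh : Real.cosh (dist z1 z2) < Real.cosh (dist z1 w) := by
    rw [UpperHalfPlane.cosh_dist, UpperHalfPlane.cosh_dist]
    have hd1 : dist (z1 : ℂ) (z2 : ℂ) ^ 2 = (z1.re - z2.re) ^ 2 + (z1.im - z2.im) ^ 2 := by
      rw [Complex.dist_eq, Complex.sq_norm, Complex.normSq_apply]
      simp [Complex.sub_re, Complex.sub_im]
      ring
    have hd2 : dist (z1 : ℂ) (w : ℂ) ^ 2 = (z1.re - w.re) ^ 2 + (z1.im - w.im) ^ 2 := by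
      rw [Complex.dist_eq, Complex.sq_norm, Complex.normSq_apply]
      simp [Complex.sub_re, Complex.sub_im]
      ring
    rw [hd1, hd2]
    have hdx : (z1.re - z2.re) ^ 2 ≤ 1 := by
      have h1 := abs_le.mp hx1
      have h2 := abs_le.mp hx2
      nlinarith
    have key := stmt_4_key z1.im z2.im w.im h12 hy2 ht0 ht
    have h1 : (z1.re - z2.re) ^ 2 + (z1.im - z2.im) ^ 2 ≤ 1 + (z1.im - z2.im) ^ 2 := by linarith
    have hdiv : ((z1.re - z2.re) ^ 2 + (z1.im - z2.im) ^ 2) / (2 * z1.im * z2.im) <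
        ((z1.re - w.re) ^ 2 + (z1.im - w.im) ^ 2) / (2 * z1.im * w.im) := by
      rw [div_lt_div_iff₀ (by positivity) (by positivity)]
      nlinarith [sq_nonneg (z1.re - w.re), mul_pos ha0 ht0, mul_pos ha0 hb0]
    linarith
  have h1 : |dist z1 z2| < |dist z1 w| := Real.cosh_lt_cosh.mp hcosh
  rwa [abs_of_nonneg dist_nonneg, abs_of_nonneg dist_nonneg] at h1
end

section
/- Let z1 = x1 + i y1 and z2 = x2 + i y2 be in the strip P(T) = {x+iy : 0 < x < 1, y ≥ T} with y1 ≥ y2, where T ≥ 100 + 10/c for some c > 0. Let z0 = x0 + i y0 with y0 ≤ 1/(c^2 y2). Then ((x1-x0)^2 + y1^2 + y0^2)/(y1 y0) - ((x1-x2)^2 + y1^2 + y2^2)/(y1 y2) ≥ 97 > 0; in particular the hyperbolic distance from z1 to z0 strictly exceeds that from z1 to z2. -/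
open UpperHalfPlane Real

set_option maxHeartbeats 1000000 in
/-- For `z1 = x1+iy1`, `z2 = x2+iy2` in the strip `P(T) = {x+iy : 0 < x < 1, y ≥ T}`
with `y1 ≥ y2` and `T ≥ 100 + 10/c` (`c > 0`), and `z0 = x0+iy0` with
`y0 ≤ 1/(c² y2)`, the difference of normalized cosh-distances is at least `97`,
and in particular `d(z1, z0) > d(z1, z2)`. -/
theorem stmt_16 (c T : ℝ) (hc : 0 < c) (hT : T ≥ 100 + 10 / c) (z1 z2 z0 : ℍ)
    (hx1 : 0 < z1.re ∧ z1.re < 1) (hx2 : 0 < z2.re ∧ z2.re < 1)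
    (hy2 : z2.im ≥ T) (hy1 : z1.im ≥ T) (h12 : z1.im ≥ z2.im)
    (h0 : z0.im ≤ 1 / (c ^ 2 * z2.im)) :
    ((z1.re - z0.re) ^ 2 + z1.im ^ 2 + z0.im ^ 2) / (z1.im * z0.im) -
        ((z1.re - z2.re) ^ 2 + z1.im ^ 2 + z2.im ^ 2) / (z1.im * z2.im) ≥ 97 ∧
      dist z1 z0 > dist z1 z2 := by
  have hy1p : 0 < z1.im := z1.im_pos
  have hy2p : 0 < z2.im := z2.im_pos
  have hy0p : 0 < z0.im := z0.im_pos
  have hTc : T ≥ 100 := le_trans (le_add_of_nonneg_right (by positivity)) hT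
  have hy2' : z2.im ≥ 100 := le_trans hTc hy2
  have hy1' : z1.im ≥ 100 := le_trans hTc hy1
  have hcy2 : c * z2.im ≥ 10 := by
    have h1 : c * z2.im ≥ c * (100 + 10 / c) := by nlinarith
    have h2 : c * (100 + 10 / c) = 100 * c + 10 := by field_simp
    nlinarith
  have hc2y2 : c ^ 2 * z2.im ^ 2 ≥ 100 := by nlinarith
  have hy0le : z0.im ≤ z2.im / 100 := by
    refine le_trans h0 ?_
    rw [div_le_div_iff₀ (by positivity) (by norm_num)]
    nlinarith
  have hx12 : (z1.re - z2.re) ^ 2 ≤ 1 := by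
    obtain ⟨a, b⟩ := hx1; obtain ⟨d, e⟩ := hx2; nlinarith
  have h1 : z1.im ^ 2 * z0.im ≤ z1.im ^ 2 * (z2.im / 100) :=
    mul_le_mul_of_nonneg_left hy0le (by positivity)
  have h2 : z2.im ^ 2 * z0.im ≤ z2.im ^ 2 * (z2.im / 100) :=
    mul_le_mul_of_nonneg_left hy0le (by positivity)
  have h3 : (97 * (z1.im * z2.im)) * z0.im ≤ (97 * (z1.im * z2.im)) * (z2.im / 100) :=
    mul_le_mul_of_nonneg_left hy0le (by positivity)
  have hsq : z2.im ^ 2 ≤ z1.im ^ 2 := by nlinarith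
  have hA : z2.im ^ 3 ≤ z1.im ^ 2 * z2.im := by
    nlinarith [mul_le_mul_of_nonneg_right hsq hy2p.le]
  have hB : z1.im * z2.im ^ 2 ≤ z1.im ^ 2 * z2.im := by
    nlinarith [mul_le_mul_of_nonneg_right (mul_le_mul_of_nonneg_left h12 hy2p.le) hy1p.le]
  have h1le : (1:ℝ) ≤ z1.im ^ 2 := by nlinarith
  have hC : z2.im ≤ z1.im ^ 2 * z2.im := by
    nlinarith [mul_le_mul_of_nonneg_right h1le hy2p.le]
  have aux : z1.im ^ 2 * z2.im - z0.im * (1 + z1.im ^ 2 + z2.im ^ 2)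
      - 97 * z1.im * z0.im * z2.im ≥ 0 := by linarith [h1, h2, h3, hA, hB, hC, hy0le]
  have key : ((z1.re - z0.re) ^ 2 + z1.im ^ 2 + z0.im ^ 2) / (z1.im * z0.im) -
      ((z1.re - z2.re) ^ 2 + z1.im ^ 2 + z2.im ^ 2) / (z1.im * z2.im) ≥ 97 := by
    rw [div_sub_div _ _ (by positivity) (by positivity), ge_iff_le,
      le_div_iff₀ (by positivity)]
    have t1 : z1.im * (z1.im ^ 2 * z2.im - z0.im * (1 + z1.im ^ 2 + z2.im ^ 2)
        - 97 * z1.im * z0.im * z2.im) ≥ 0 := mul_nonneg hy1p.le aux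
    have t2 : (z1.re - z0.re) ^ 2 * (z1.im * z2.im) ≥ 0 := by positivity
    have t3 : z0.im ^ 2 * z1.im * z2.im ≥ 0 := by positivity
    have t4 : z1.im * z0.im * (1 - (z1.re - z2.re) ^ 2) ≥ 0 :=
      mul_nonneg (by positivity) (by linarith)
    linarith [t1, t2, t3, t4]
  refine ⟨key, ?_⟩
  have hd0 : ∀ (z w : ℍ), 2 * Real.cosh (dist z w) =
      ((z.re - w.re) ^ 2 + z.im ^ 2 + w.im ^ 2) / (z.im * w.im) := by
    intro z w
    rw [UpperHalfPlane.cosh_dist, Complex.dist_eq_re_im,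
      Real.sq_sqrt (by positivity)]
    have hz := z.im_pos; have hw := w.im_pos
    simp only [UpperHalfPlane.coe_re, UpperHalfPlane.coe_im]
    field_simp
    ring
  have hcosh : Real.cosh (dist z1 z2) < Real.cosh (dist z1 z0) := by
    have e0 := hd0 z1 z0
    have e2 := hd0 z1 z2
    linarith
  rw [Real.cosh_lt_cosh, abs_of_nonneg dist_nonneg, abs_of_nonneg dist_nonneg] at hcosh
  exact hcosh
end

section
/- Let Γ_o = {γ ∈ PSL(2,ℤ) : d(2i, γ(2i)) ≤ diam(F_o) + 2 r0} where cosh(diam(F_o)) ≤ 23√3/24 and cosh(r0) = 5√3/6. Then |Γ_o| ≤ Area(D(2i, R))/Area(F_o) ≤ 252, where R = diam(F_o) + 3 r0, Area(D(2i,R)) = 2π(cosh R - 1) = (π/36)(848 + 11√4381), and Area(F_o) = π/3 - 1/2. -/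
/-!
Mathlib's formula `cosh d(z, w) = 1 + |z - w|² / (2 Im z Im w)` shows that on the rectangle
`|x| ≤ 1/2, √3/2 ≤ y ≤ 2`, which contains `F_o`, any two points satisfy `cosh d ≤ 1.7` and
`cosh d(2i, z) ≤ 1.45`; hence `diam F_o ≤ arcosh 1.7`, `r0 ≤ arcosh 1.45`, and the addition
formula gives `cosh (diam F_o + 2 r0) ≤ 11`. For `γ = (a b; c d) ∈ SL(2, ℤ)`, using `ad - bc = 1`,
`8 cosh d(2i, γ 2i) = 4a² + b² + 16c² + 4d²`. So every `γ` defining an element of `Γ_o` satisfies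
`4a² + b² + 16c² + 4d² ≤ 88`, and a direct enumeration of these matrices replaces the area
comparison of the paper.
-/

open UpperHalfPlane Real MatrixGroups

namespace Real

lemma le_arcosh_of_cosh_le {x u : ℝ} (hx : 0 ≤ x) (h : cosh x ≤ u) : x ≤ arcosh u := by
  rw [← arcosh_cosh hx]
  exact (arcosh_le_arcosh (cosh_pos x) (by linarith [one_le_cosh x])).2 h

lemma cosh_le_of_le_of_nonneg {x y : ℝ} (hx : 0 ≤ x) (hxy : x ≤ y) : cosh x ≤ cosh y :=
  cosh_strictMonoOn.monotoneOn hx (hx.trans hxy) hxy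

lemma sinh_le_sqrt_of_cosh_le {a A : ℝ} (ha : 0 ≤ a) (hA : cosh a ≤ A) : sinh a ≤ √(A ^ 2 - 1) := by
  rw [le_sqrt (sinh_nonneg_iff.2 ha) (by nlinarith [one_le_cosh a])]
  nlinarith [cosh_sq a, one_le_cosh a]

lemma cosh_add_le {a b A B : ℝ} (ha : 0 ≤ a) (hb : 0 ≤ b) (hA : cosh a ≤ A) (hB : cosh b ≤ B) :
    cosh (a + b) ≤ A * B + √(A ^ 2 - 1) * √(B ^ 2 - 1) := by
  rw [cosh_add]
  exact add_le_add (mul_le_mul hA hB (cosh_pos b).le ((cosh_pos a).le.trans hA))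
    (mul_le_mul (sinh_le_sqrt_of_cosh_le ha hA) (sinh_le_sqrt_of_cosh_le hb hB)
      (sinh_nonneg_iff.2 hb) (sqrt_nonneg _))

lemma cosh_arcosh_add_two_mul_arcosh_le : cosh (arcosh 1.7 + 2 * arcosh 1.45) ≤ 11 := by
  have h₁ := arcosh_nonneg (x := 1.7) (by norm_num)
  have h₂ := arcosh_nonneg (x := 1.45) (by norm_num)
  have hdouble : cosh (2 * arcosh 1.45) ≤ 3.205 := by
    rw [two_mul]
    have hcosh₂ : cosh (arcosh 1.45) ≤ 1.45 := (cosh_arcosh (by norm_num)).le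
    refine (cosh_add_le h₂ h₂ hcosh₂ hcosh₂).trans ?_
    rw [mul_self_sqrt (by norm_num)]
    norm_num
  have hs₁ : √((1.7 : ℝ) ^ 2 - 1) ≤ 1.375 := (sqrt_le_left (by norm_num)).2 (by norm_num)
  have hs₂ : √((3.205 : ℝ) ^ 2 - 1) ≤ 3.05 := (sqrt_le_left (by norm_num)).2 (by norm_num)
  calc cosh (arcosh 1.7 + 2 * arcosh 1.45)
      ≤ 1.7 * 3.205 + √((1.7 : ℝ) ^ 2 - 1) * √((3.205 : ℝ) ^ 2 - 1) :=
        cosh_add_le h₁ (by positivity) (cosh_arcosh (by norm_num)).le hdouble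
    _ ≤ 1.7 * 3.205 + 1.375 * 3.05 := by gcongr
    _ ≤ 11 := by norm_num

end Real

lemma Metric.diam_le_arcosh_of_cosh_dist_le {X : Type*} [PseudoMetricSpace X] {s : Set X} {u : ℝ}
    (hu : 1 ≤ u) (h : ∀ x ∈ s, ∀ y ∈ s, cosh (dist x y) ≤ u) : Metric.diam s ≤ arcosh u :=
  Metric.diam_le_of_forall_dist_le (arcosh_nonneg hu) fun x hx y hy =>
    le_arcosh_of_cosh_le dist_nonneg (h x hx y hy)

lemma sSup_image_dist_le_arcosh_of_cosh_dist_le {X : Type*} [PseudoMetricSpace X] {s : Set X}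
    {p : X} {u : ℝ} (hu : 1 ≤ u) (h : ∀ x ∈ s, cosh (dist p x) ≤ u) :
    sSup ((dist p ·) '' s) ≤ arcosh u :=
  Real.sSup_le (by rintro _ ⟨x, hx, rfl⟩; exact le_arcosh_of_cosh_le dist_nonneg (h x hx))
    (arcosh_nonneg hu)

namespace ModularGroup

def orbitForm (g : SL(2, ℤ)) : ℤ := 4 * g 0 0 ^ 2 + g 0 1 ^ 2 + 16 * g 1 0 ^ 2 + 4 * g 1 1 ^ 2

lemma det_fin_two_eq_one (g : SL(2, ℤ)) : g 0 0 * g 1 1 - g 0 1 * g 1 0 = 1 := by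
  rw [← Matrix.det_fin_two]; exact g.det_coe

def entries (g : SL(2, ℤ)) : ℤ × ℤ × ℤ × ℤ := (g 0 0, g 0 1, g 1 0, g 1 1)

lemma entries_injective : Function.Injective entries := by
  intro g h hgh
  simp only [entries, Prod.mk.injEq] at hgh
  obtain ⟨h00, h01, h10, h11⟩ := hgh
  ext i j
  fin_cases i <;> fin_cases j <;> assumption

noncomputable def smallEntries : Finset (ℤ × ℤ × ℤ × ℤ) :=
  (Finset.Icc (-4) 4 ×ˢ Finset.Icc (-9) 9 ×ˢ Finset.Icc (-2) 2 ×ˢ Finset.Icc (-4) 4).filter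
    fun ⟨a, b, c, d⟩ => a * d - b * c = 1 ∧ 4 * a ^ 2 + b ^ 2 + 16 * c ^ 2 + 4 * d ^ 2 ≤ 88

set_option maxRecDepth 100000 in
lemma card_smallEntries : smallEntries.card ≤ 252 := by decide

lemma entries_mem_smallEntries {g : SL(2, ℤ)} (hg : orbitForm g ≤ 88) :
    entries g ∈ smallEntries := by
  unfold orbitForm at hg
  have ha : g 0 0 ^ 2 < 5 ^ 2 := by nlinarith
  have hb : g 0 1 ^ 2 < 10 ^ 2 := by nlinarith
  have hc : g 1 0 ^ 2 < 3 ^ 2 := by nlinarith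
  have hd : g 1 1 ^ 2 < 5 ^ 2 := by nlinarith
  have := abs_lt_of_sq_lt_sq' ha (by norm_num)
  have := abs_lt_of_sq_lt_sq' hb (by norm_num)
  have := abs_lt_of_sq_lt_sq' hc (by norm_num)
  have := abs_lt_of_sq_lt_sq' hd (by norm_num)
  simp only [smallEntries, entries, Finset.mem_filter, Finset.mem_product, Finset.mem_Icc]
  exact ⟨by omega, det_fin_two_eq_one g, hg⟩

lemma finite_setOf_orbitForm_le : {g : SL(2, ℤ) | orbitForm g ≤ 88}.Finite :=
  smallEntries.finite_toSet.of_injOn (fun _ => entries_mem_smallEntries) entries_injective.injOn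

lemma ncard_setOf_orbitForm_le : {g : SL(2, ℤ) | orbitForm g ≤ 88}.ncard ≤ 252 :=
  (Set.ncard_le_ncard_of_injOn entries (fun _ => entries_mem_smallEntries)
    entries_injective.injOn smallEntries.finite_toSet).trans
    ((Set.ncard_coe_finset _).trans_le card_smallEntries)

end ModularGroup

namespace UpperHalfPlane

open ModularGroup

-- `0.866` is a rational lower bound for `√3 / 2`, the least imaginary part on `F_o`.
def fundamentalBox : Set ℍ := {z | |z.re| ≤ 1 / 2 ∧ 0.866 ≤ z.im ∧ z.im ≤ 2}

lemma subset_fundamentalBox :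
    {z : ℍ | 1 ≤ ‖(z : ℂ)‖ ∧ |z.re| ≤ 1 / 2 ∧ z.im < 2} ⊆ fundamentalBox := by
  rintro z ⟨hnorm, hre, him⟩
  have hre_sq : z.re ^ 2 ≤ 1 / 4 := by nlinarith [sq_abs z.re, abs_nonneg z.re]
  have hnorm_sq : ‖(z : ℂ)‖ ^ 2 = z.re ^ 2 + z.im ^ 2 := by
    rw [Complex.sq_norm, Complex.normSq_apply, coe_re, coe_im]; ring
  exact ⟨hre, by nlinarith [z.im_pos, norm_nonneg (z : ℂ)], him.le⟩

lemma cosh_dist_le_of_mem_fundamentalBox {z w : ℍ} (hz : z ∈ fundamentalBox)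
    (hw : w ∈ fundamentalBox) : cosh (dist z w) ≤ 1.7 := by
  obtain ⟨hzre, hzlo, hzhi⟩ := hz
  obtain ⟨hwre, hwlo, hwhi⟩ := hw
  have hre : (z.re - w.re) ^ 2 ≤ 1 := by
    nlinarith [abs_le.1 hzre, abs_le.1 hwre]
  rw [cosh_dist', div_le_iff₀ (by positivity)]
  nlinarith [mul_nonneg (sub_nonneg.2 hzlo) (sub_nonneg.2 hwhi),
    mul_nonneg (sub_nonneg.2 hwlo) (sub_nonneg.2 hzhi),
    mul_nonneg (sub_nonneg.2 hzlo) (sub_nonneg.2 hwlo),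
    mul_nonneg (sub_nonneg.2 hzhi) (sub_nonneg.2 hwhi)]

lemma cosh_dist_le_of_mem_fundamentalBox_of_re_im {p z : ℍ} (hre : p.re = 0) (him : p.im = 2)
    (hz : z ∈ fundamentalBox) : cosh (dist p z) ≤ 1.45 := by
  obtain ⟨hzre, hzlo, hzhi⟩ := hz
  rw [cosh_dist', hre, him, div_le_iff₀ (by positivity)]
  nlinarith [abs_le.1 hzre, mul_nonneg (sub_nonneg.2 hzlo) (sub_nonneg.2 hzhi)]

theorem cosh_dist_smul (g : SL(2, ℤ)) (z : ℍ) :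
    cosh (dist z (g • z)) = 1 + Complex.normSq
      ((g 1 0 : ℂ) * z ^ 2 + ((g 1 1 : ℂ) - g 0 0) * z - g 0 1) / (2 * z.im ^ 2) := by
  have hden : (g 1 0 : ℂ) * z + g 1 1 ≠ 0 := ModularGroup.denom_apply g z ▸ denom_ne_zero _ z
  have hsmul : (↑(g • z) : ℂ) = ((g 0 0 : ℂ) * z + g 0 1) / ((g 1 0 : ℂ) * z + g 1 1) := by
    rw [coe_specialLinearGroup_apply]
    simp only [algebraMap_int_eq, eq_intCast, Complex.ofReal_intCast]
  have hsub : (z : ℂ) - ↑(g • z) =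
      ((g 1 0 : ℂ) * z ^ 2 + ((g 1 1 : ℂ) - g 0 0) * z - g 0 1) / ((g 1 0 : ℂ) * z + g 1 1) := by
    rw [hsmul, eq_div_iff hden, sub_mul, div_mul_cancel₀ _ hden]
    ring
  rw [cosh_dist, ModularGroup.im_smul_eq_div_normSq, ModularGroup.denom_apply, Complex.dist_eq,
    Complex.sq_norm, hsub, Complex.normSq_div]
  have := Complex.normSq_pos.2 hden
  field_simp

theorem cosh_dist_smul_of_re_im (g : SL(2, ℤ)) {p : ℍ} (hre : p.re = 0) (him : p.im = 2) :
    cosh (dist p (g • p)) = orbitForm g / 8 := by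
  have hp : (p : ℂ) = 2 * Complex.I := Complex.ext (by simp [hre]) (by simp [him])
  have hpoly : (g 1 0 : ℂ) * (2 * Complex.I) ^ 2 + ((g 1 1 : ℂ) - g 0 0) * (2 * Complex.I) - g 0 1
      = ((-(4 * g 1 0 + g 0 1) : ℝ) : ℂ) + ((2 * (g 1 1 - g 0 0) : ℝ) : ℂ) * Complex.I := by
    push_cast
    linear_combination (4 * (g 1 0 : ℂ)) * Complex.I_sq
  have hdet : (g 0 0 * g 1 1 - g 0 1 * g 1 0 : ℝ) = 1 := by
    exact_mod_cast det_fin_two_eq_one g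
  rw [cosh_dist_smul, hp, him, hpoly, Complex.normSq_add_mul_I, orbitForm]
  push_cast
  linear_combination -hdet

end UpperHalfPlane

/-- The set `Γ_o = {γ ∈ PSL(2,ℤ) : d(2i, γ 2i) ≤ diam F_o + 2 r0}` (elements of the
modular group regarded as transformations of `ℍ`, which identifies `±γ`) has at most
`252` elements, where `F_o = {z : |z| ≥ 1, |Re z| ≤ 1/2, Im z < 2}` and
`r0 = sup_{z ∈ F_o} d(2i, z)`. -/
theorem stmt_18
    (Fo : Set ℍ) (hFo : Fo = {z : ℍ | 1 ≤ ‖(z : ℂ)‖ ∧ |z.re| ≤ 1 / 2 ∧ z.im < 2})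
    (twoI : ℍ) (htwoI : (twoI : ℂ) = ⟨0, 2⟩)
    (r0 : ℝ) (hr0 : r0 = sSup ((dist twoI ·) '' Fo)) :
    {f : ℍ → ℍ | ∃ γ : Matrix.SpecialLinearGroup (Fin 2) ℤ,
        f = (fun z => γ • z) ∧ dist twoI (γ • twoI) ≤ Metric.diam Fo + 2 * r0}.ncard
      ≤ 252 := by
  have hre : twoI.re = 0 := congrArg Complex.re htwoI
  have him : twoI.im = 2 := congrArg Complex.im htwoI
  have hbox : Fo ⊆ fundamentalBox := hFo ▸ subset_fundamentalBox
  have hdiam : Metric.diam Fo ≤ arcosh 1.7 :=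
    Metric.diam_le_arcosh_of_cosh_dist_le (by norm_num) fun z hz w hw =>
      cosh_dist_le_of_mem_fundamentalBox (hbox hz) (hbox hw)
  have hradius : r0 ≤ arcosh 1.45 :=
    hr0 ▸ sSup_image_dist_le_arcosh_of_cosh_dist_le (by norm_num) fun z hz =>
      cosh_dist_le_of_mem_fundamentalBox_of_re_im hre him (hbox hz)
  have horbit : ∀ γ : SL(2, ℤ),
      dist twoI (γ • twoI) ≤ Metric.diam Fo + 2 * r0 → ModularGroup.orbitForm γ ≤ 88 := by
    intro γ hγ
    have hcosh : cosh (dist twoI (γ • twoI)) ≤ 11 :=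
      (cosh_le_of_le_of_nonneg dist_nonneg (by linarith)).trans cosh_arcosh_add_two_mul_arcosh_le
    rw [cosh_dist_smul_of_re_im γ hre him] at hcosh
    exact_mod_cast (by linarith : (ModularGroup.orbitForm γ : ℝ) ≤ 88)
  have hfin := ModularGroup.finite_setOf_orbitForm_le
  calc _ ≤ ((fun γ : SL(2, ℤ) => fun z : ℍ => γ • z) ''
          {γ | ModularGroup.orbitForm γ ≤ 88}).ncard :=
        Set.ncard_le_ncard (by rintro _ ⟨γ, rfl, hγ⟩; exact ⟨γ, horbit γ hγ, rfl⟩) (hfin.image _)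
    _ ≤ _ := Set.ncard_image_le hfin
    _ ≤ 252 := ModularGroup.ncard_setOf_orbitForm_le
end
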